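/- arXiv:2407.00749 — 2 statements merged into one kernel-verified Lean document; each statement's English description precedes it below -/
import Mathlib

section
/- Let Q be a Markov transition kernel on a Polish space X, reversible with respect to a stationary probability measure π, such that the densities h_{δ_x,n} := d(δ_x Q^n)/dπ exist for all x and n. Then for all x, y ∈ X and every n ∈ ℕ, |h_{δ_x,2n}(y) − 1| ≤ ‖h_{δ_x,n} − 1‖_{L²(π)} · ‖h_{δ_y,n} − 1‖_{L²(π)}. -/
open MeasureTheory ProbabilityTheory ENNReal Filter

namespace SpectralProfile

variable {X : Type*} [MeasurableSpace X]

/-- The `k`-step transition kernel `P^k`. -/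
noncomputable def kpow (P : Kernel X X) : ℕ → Kernel X X
  | 0 => Kernel.id
  | (n + 1) => P ∘ₖ (kpow P n)

/-- The distribution `μ P^k` after `k` steps started from `μ`. -/
noncomputable def stepDist (μ : Measure X) (P : Kernel X X) (k : ℕ) : Measure X :=
  μ.bind (kpow P k)

/-- `π` is a stationary distribution for `P`. -/
def IsStationary (π : Measure X) (P : Kernel X X) : Prop :=
  π.bind P = π

/-- `P` is reversible with respect to `π`. -/
def IsReversible (π : Measure X) (P : Kernel X X) : Prop :=
  ∀ A B : Set X, MeasurableSet A → MeasurableSet B →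
    ∫⁻ x in A, P x B ∂π = ∫⁻ x in B, P x A ∂π

/-- `P` is irreducible (with respect to `π`): every set of positive stationary measure
is eventually reachable from every point. -/
def IsIrreducible (π : Measure X) (P : Kernel X X) : Prop :=
  ∀ x : X, ∀ A : Set X, MeasurableSet A → 0 < π A → ∃ n : ℕ, 0 < kpow P n x A

/-- `P` is the exactly half-lazy version of `Pt`:  `P = ½ Pt + ½ I`. -/
def IsHalfLazy (P Pt : Kernel X X) : Prop :=
  ∀ (x : X) (A : Set X), MeasurableSet A →
    P x A = 2⁻¹ * Pt x A + 2⁻¹ * Measure.dirac x A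

/-- Each distribution `Pt x` has a density with respect to `π`. -/
def HasDensities (Pt : Kernel X X) (π : Measure X) : Prop :=
  ∀ x : X, Pt x ≪ π

/-- `μ` is a `β`-warm start with respect to `π`. -/
def IsWarmStart (μ π : Measure X) (β : ℝ) : Prop :=
  ∀ A : Set X, MeasurableSet A → μ A ≤ ENNReal.ofReal β * π A

/-- The `L²` distance `d₂(Q, π)` between a measure `Q` and `π`. -/
noncomputable def L2dist (Q π : Measure X) : ℝ :=
  Real.sqrt (∫ x, ((Q.rnDeriv π x).toReal - 1) ^ 2 ∂π)

/-- The `L²` mixing time `τ₂(ε; μ, P)` from initial distribution `μ`. -/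
noncomputable def mixTime (π : Measure X) (P : Kernel X X) (μ : Measure X) (ε : ℝ) : ℕ :=
  sInf {k : ℕ | L2dist (stepDist μ P k) π ≤ ε}

/-- `⌈k/2⌉` for a natural number `k`. -/
def ceilHalf (k : ℕ) : ℕ := (k + 1) / 2

/-- The quantity `d_{2,δ}(x, P, k)`, valued in `ℝ≥0∞`. -/
noncomputable def d2delta (π : Measure X) (P Pt : Kernel X X) (δ : ℝ) (x : X) (k : ℕ) :
    ℝ≥0∞ :=
  if kpow P (ceilHalf k) x {x} ≤ ENNReal.ofReal δ then
    ENNReal.ofReal (L2dist (stepDist ((Measure.dirac x).bind Pt) P (ceilHalf k)) π + δ)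
  else ⊤

/-- The `δ`-approximate `L²` mixing time `τ_{2,δ}(ε; P)` from a single starting point. -/
noncomputable def mixTimeApprox (π : Measure X) (P Pt : Kernel X X) (δ ε : ℝ) : ℕ :=
  sInf {k : ℕ | (⨆ x : X, d2delta π P Pt δ x k) ≤ ENNReal.ofReal ε}

/-- The Dirichlet form `E(f, f)` of the kernel `P` on `L²(π)`. -/
noncomputable def dirichletForm (π : Measure X) (P : Kernel X X) (f : X → ℝ) : ℝ :=
  (1 / 2) * ∫ x, (∫ y, (f x - f y) ^ 2 ∂(P x)) ∂π

/-- The spectral gap `γ(A)` of `P` for the set `A`. -/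
noncomputable def specGap (π : Measure X) (P : Kernel X X) (A : Set X) : ℝ :=
  sInf {r : ℝ | ∃ f : X → ℝ, MemLp f 2 π ∧ Function.support f ⊆ A ∧ (∀ x, 0 ≤ f x) ∧
    (¬ ∃ c : ℝ, f =ᵐ[π] fun _ => c) ∧ r = dirichletForm π P f / variance f π}

/-- The spectral profile `Γ(v)` of `P`. -/
noncomputable def specProfile (π : Measure X) (P : Kernel X X) (v : ℝ) : ℝ :=
  sInf {r : ℝ | ∃ A : Set X, MeasurableSet A ∧ 0 < π A ∧ π A ≤ ENNReal.ofReal v ∧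
    r = specGap π P A}

/-- The normalized restriction `π|_S` of `π` to `S`. -/
noncomputable def restrictMeasure (π : Measure X) (S : Set X) : Measure X :=
  (π S)⁻¹ • π.restrict S

/-- The eigenfunction expansion assumption (Assumption 2) for the restricted sub-stochastic
kernel `Pt_S` on `L²(π|_S)`: there is an orthonormal basis of eigenfunctions `f i` with
eigenvalues `ev i` decreasing to `0`, `f 0 ≡ 1`, `0 ≤ ev i < 1`, together with the
resulting spectral expansion of the densities of the iterates of `Pt_S`. -/
structure EigenExpansion (π : Measure X) (Pt : Kernel X X) (S : Set X)
    (hS : MeasurableSet S) where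
  f : ℕ → X → ℝ
  ev : ℕ → ℝ
  f_zero : ∀ x, f 0 x = 1
  orthonormal : ∀ i j : ℕ,
    ∫ x, f i x * f j x ∂(restrictMeasure π S) = if i = j then 1 else 0
  ev_nonneg : ∀ i, 0 ≤ ev i
  ev_lt_one : ∀ i, ev i < 1
  ev_anti : Antitone ev
  ev_tendsto : Tendsto ev atTop (nhds 0)
  eigen : ∀ (i : ℕ) (x : X),
    ∫ y, (((Measure.dirac x).bind (Pt.restrict hS)).rnDeriv (restrictMeasure π S) y).toReal
      * f i y ∂(restrictMeasure π S) = ev i * f i x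
  summable : ∀ (ℓ : ℕ), 1 ≤ ℓ → ∀ x y : X,
    Summable fun i : ℕ => |ev i ^ ℓ * f i x * f i y|
  expansion : ∀ (ℓ : ℕ), 1 ≤ ℓ → ∀ x y : X,
    (((Measure.dirac x).bind (kpow (Pt.restrict hS) ℓ)).rnDeriv
        (restrictMeasure π S) y).toReal = ∑' i : ℕ, ev i ^ ℓ * f i x * f i y

end SpectralProfile

/-!
By Chapman–Kolmogorov and reversibility of `Q^n`,
`h_{δ_x,2n}(y) = ∫ h_{δ_x,n} h_{δ_y,n} dπ`. Both densities have `π`-mean one, so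
`h_{δ_x,2n}(y) - 1` is their covariance under `π`, and Cauchy–Schwarz bounds it by the product of
their standard deviations, which are the two `L²` distances. Since `δ_z ≪ π`, every point is an
atom of `π`, so `h(y) = μ{y} / π{y}` pointwise; in particular `∫ h_{δ_z,n}² dπ = h_{δ_z,2n}(z)` is
finite.
-/

namespace SpectralProfile

variable {X : Type*} [MeasurableSpace X]

section Powers

variable (P : Kernel X X)

@[simp] lemma kpow_zero : kpow P 0 = Kernel.id := rfl

@[simp] lemma kpow_succ (n : ℕ) : kpow P (n + 1) = P ∘ₖ kpow P n := rfl

instance isMarkovKernel_kpow [IsMarkovKernel P] (n : ℕ) : IsMarkovKernel (kpow P n) := by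
  induction n with
  | zero => rw [kpow_zero]; infer_instance
  | succ n ih => rw [kpow_succ]; infer_instance

lemma kpow_add (m n : ℕ) : kpow P (m + n) = kpow P m ∘ₖ kpow P n := by
  induction m with
  | zero => rw [Nat.zero_add, kpow_zero, Kernel.id_comp]
  | succ m ih => rw [Nat.add_right_comm, kpow_succ, ih, kpow_succ, Kernel.comp_assoc]

lemma kpow_succ' (n : ℕ) : kpow P (n + 1) = kpow P n ∘ₖ P := by
  rw [kpow_add, kpow_succ, kpow_zero, Kernel.comp_id]

lemma stepDist_dirac (x : X) (n : ℕ) : stepDist (Measure.dirac x) P n = kpow P n x :=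
  Measure.dirac_bind (Kernel.measurable _) x

end Powers

section Reversible

variable {π : Measure X} {κ : Kernel X X}

lemma IsReversible.map_swap_compProd [IsFiniteMeasure π] [IsFiniteKernel κ]
    (hκ : IsReversible π κ) : (π ⊗ₘ κ).map Prod.swap = π ⊗ₘ κ := by
  refine ext_of_generate_finite _ generateFrom_prod.symm isPiSystem_prod ?_ ?_
  · rintro _ ⟨A, hA, B, hB, rfl⟩
    rw [Measure.map_apply measurable_swap (hA.prod hB), Set.preimage_swap_prod,
      Measure.compProd_apply_prod hB hA, Measure.compProd_apply_prod hA hB]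
    exact (hκ A B hA hB).symm
  · rw [Measure.map_apply measurable_swap MeasurableSet.univ, Set.preimage_univ]

lemma IsReversible.lintegral_mul_lintegral_comm [IsFiniteMeasure π] [IsFiniteKernel κ]
    (hκ : IsReversible π κ) {f g : X → ℝ≥0∞} (hf : Measurable f) (hg : Measurable g) :
    ∫⁻ x, f x * ∫⁻ y, g y ∂κ x ∂π = ∫⁻ x, g x * ∫⁻ y, f y ∂κ x ∂π := by
  have hfg : Measurable fun p : X × X => f p.1 * g p.2 :=
    (hf.comp measurable_fst).mul (hg.comp measurable_snd)
  calc ∫⁻ x, f x * ∫⁻ y, g y ∂κ x ∂π = ∫⁻ p, f p.1 * g p.2 ∂(π ⊗ₘ κ) := by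
        rw [Measure.lintegral_compProd hfg]
        simp_rw [lintegral_const_mul _ hg]
    _ = ∫⁻ p, f p.2 * g p.1 ∂(π ⊗ₘ κ) := by
        conv_lhs => rw [← hκ.map_swap_compProd]
        rw [lintegral_map hfg measurable_swap]
        rfl
    _ = ∫⁻ x, g x * ∫⁻ y, f y ∂κ x ∂π := by
        rw [Measure.lintegral_compProd (f := fun p => f p.2 * g p.1) (by fun_prop)]
        simp_rw [lintegral_mul_const _ hf, mul_comm]

lemma IsReversible.lintegral_mul_lintegral_kpow_comm [IsFiniteMeasure π] {Q : Kernel X X}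
    [IsFiniteKernel Q] (hQ : IsReversible π Q) (n : ℕ) {f g : X → ℝ≥0∞} (hf : Measurable f)
    (hg : Measurable g) :
    ∫⁻ x, f x * ∫⁻ y, g y ∂kpow Q n x ∂π = ∫⁻ x, g x * ∫⁻ y, f y ∂kpow Q n x ∂π := by
  induction n generalizing f g with
  | zero =>
    simp_rw [kpow_zero, Kernel.id_apply, lintegral_dirac' _ hf, lintegral_dirac' _ hg, mul_comm]
  | succ n ih =>
    have hQg : Measurable fun x => ∫⁻ y, g y ∂Q x := hg.lintegral_kernel
    have hPf : Measurable fun x => ∫⁻ y, f y ∂kpow Q n x := hf.lintegral_kernel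
    calc ∫⁻ x, f x * ∫⁻ y, g y ∂kpow Q (n + 1) x ∂π
        = ∫⁻ x, (∫⁻ y, g y ∂Q x) * ∫⁻ y, f y ∂kpow Q n x ∂π := by
          simp_rw [kpow_succ, Kernel.lintegral_comp _ _ _ hg]
          exact ih hf hQg
      _ = ∫⁻ x, g x * ∫⁻ y, f y ∂kpow Q (n + 1) x ∂π := by
          simp_rw [kpow_succ', Kernel.lintegral_comp _ _ _ hf, mul_comm (∫⁻ y, g y ∂Q _)]
          exact hQ.lintegral_mul_lintegral_comm hPf hg

end Reversible

section Densities

variable [MeasurableSingletonClass X] {π : Measure X}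

lemma measure_singleton_eq_rnDeriv_mul {μ : Measure X} [μ.HaveLebesgueDecomposition π]
    (hμ : μ ≪ π) (b : X) : μ {b} = μ.rnDeriv π b * π {b} := by
  rw [← Measure.setLIntegral_rnDeriv' hμ (measurableSet_singleton b), lintegral_singleton]

lemma lintegral_indicator_singleton_one_mul (b : X) (F : X → ℝ≥0∞) :
    ∫⁻ z, ({b} : Set X).indicator 1 z * F z ∂π = F b * π {b} := by
  simp only [← Set.indicator_mul_left, Pi.one_apply, one_mul]
  rw [lintegral_indicator (measurableSet_singleton b), lintegral_singleton]

variable [IsFiniteMeasure π] {Q : Kernel X X} [IsMarkovKernel Q]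

/-- Chapman–Kolmogorov at time `n`, then reversibility of `Q^n` to move the target `{b}` back
to the start. -/
lemma kpow_two_mul_apply_singleton (hQ : IsReversible π Q) {n : ℕ} {a b : X}
    (ha : kpow Q n a ≪ π) (hb : kpow Q n b ≪ π) :
    kpow Q (2 * n) a {b} =
      (∫⁻ z, (kpow Q n a).rnDeriv π z * (kpow Q n b).rnDeriv π z ∂π) * π {b} := by
  have hma : Measurable ((kpow Q n a).rnDeriv π) := Measure.measurable_rnDeriv _ _
  have hb1 : Measurable (({b} : Set X).indicator (1 : X → ℝ≥0∞)) :=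
    measurable_one.indicator (measurableSet_singleton b)
  calc kpow Q (2 * n) a {b} = ∫⁻ z, kpow Q n z {b} ∂kpow Q n a := by
        rw [two_mul, kpow_add, Kernel.comp_apply' _ _ _ (measurableSet_singleton b)]
    _ = ∫⁻ z, (kpow Q n a).rnDeriv π z * ∫⁻ w, ({b} : Set X).indicator 1 w ∂kpow Q n z ∂π := by
        simp_rw [lintegral_indicator_one (measurableSet_singleton b)]
        exact (lintegral_rnDeriv_mul ha
          (Kernel.measurable_coe _ (measurableSet_singleton b)).aemeasurable).symm
    _ = ∫⁻ z, ({b} : Set X).indicator 1 z * ∫⁻ w, (kpow Q n a).rnDeriv π w ∂kpow Q n z ∂π :=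
        hQ.lintegral_mul_lintegral_kpow_comm n hma hb1
    _ = (∫⁻ w, (kpow Q n a).rnDeriv π w ∂kpow Q n b) * π {b} :=
        lintegral_indicator_singleton_one_mul b _
    _ = _ := by
        rw [← lintegral_rnDeriv_mul hb hma.aemeasurable]
        simp_rw [mul_comm ((kpow Q n b).rnDeriv π _)]

lemma rnDeriv_kpow_two_mul_apply (hQ : IsReversible π Q) {n : ℕ} {a b : X}
    (ha : kpow Q n a ≪ π) (hb : kpow Q n b ≪ π) (ha' : kpow Q (2 * n) a ≪ π) (hb0 : π {b} ≠ 0) :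
    (kpow Q (2 * n) a).rnDeriv π b =
      ∫⁻ z, (kpow Q n a).rnDeriv π z * (kpow Q n b).rnDeriv π z ∂π := by
  rw [← ENNReal.mul_left_inj hb0 (measure_ne_top π {b}), ← measure_singleton_eq_rnDeriv_mul ha',
    kpow_two_mul_apply_singleton hQ ha hb]

lemma lintegral_rnDeriv_mul_rnDeriv_kpow_ne_top (hQ : IsReversible π Q) {n : ℕ} {a b : X}
    (ha : kpow Q n a ≪ π) (hb : kpow Q n b ≪ π) (hb0 : π {b} ≠ 0) :
    ∫⁻ z, (kpow Q n a).rnDeriv π z * (kpow Q n b).rnDeriv π z ∂π ≠ ⊤ := by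
  intro htop
  have h := kpow_two_mul_apply_singleton hQ ha hb
  rw [htop, ENNReal.top_mul hb0] at h
  exact measure_ne_top _ _ h

end Densities

section L2

variable {μ : Measure X}

lemma abs_integral_mul_le_sqrt_mul_sqrt {f g : X → ℝ} (hf : MemLp f 2 μ) (hg : MemLp g 2 μ) :
    |∫ x, f x * g x ∂μ| ≤ √(∫ x, f x ^ 2 ∂μ) * √(∫ x, g x ^ 2 ∂μ) := by
  have holder := integral_mul_norm_le_Lp_mul_Lq (f := f) (g := g) Real.HolderConjugate.two_two
    (by rwa [ENNReal.ofReal_ofNat]) (by rwa [ENNReal.ofReal_ofNat])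
  simp only [Real.norm_eq_abs, Real.rpow_two, sq_abs] at holder
  calc |∫ x, f x * g x ∂μ| ≤ ∫ x, |f x| * |g x| ∂μ := by
        simp_rw [← abs_mul]; exact abs_integral_le_integral_abs
    _ ≤ _ := by simpa only [Real.sqrt_eq_rpow, one_div] using holder

lemma abs_covariance_le_sqrt_variance_mul [IsFiniteMeasure μ] {f g : X → ℝ} (hf : MemLp f 2 μ)
    (hg : MemLp g 2 μ) : |cov[f, g; μ]| ≤ √Var[f; μ] * √Var[g; μ] := by
  rw [covariance, variance_eq_integral hf.aemeasurable, variance_eq_integral hg.aemeasurable]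
  exact abs_integral_mul_le_sqrt_mul_sqrt (hf.sub (memLp_const _)) (hg.sub (memLp_const _))

lemma memLp_two_toReal_of_lintegral_mul_self_ne_top {h : X → ℝ≥0∞} (hh : Measurable h)
    (h2 : ∫⁻ x, h x * h x ∂μ ≠ ⊤) : MemLp (fun x => (h x).toReal) 2 μ := by
  rw [memLp_two_iff_integrable_sq hh.ennreal_toReal.aestronglyMeasurable]
  simpa only [sq, Pi.mul_apply, ENNReal.toReal_mul] using
    integrable_toReal_of_lintegral_ne_top (hh.mul hh).aemeasurable h2

lemma L2dist_eq_sqrt_variance [IsFiniteMeasure μ] {ν : Measure X} [IsProbabilityMeasure ν]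
    (hν : ν ≪ μ) : L2dist ν μ = √Var[fun x => (ν.rnDeriv μ x).toReal; μ] := by
  rw [L2dist, variance_eq_integral (Measure.measurable_rnDeriv ν μ).ennreal_toReal.aemeasurable,
    Measure.integral_toReal_rnDeriv hν, probReal_univ]

end L2

section Atomic

variable [MeasurableSingletonClass X] {π : Measure X} [IsProbabilityMeasure π] {Q : Kernel X X}
  [IsMarkovKernel Q]

lemma memLp_two_toReal_rnDeriv_kpow (hQ : IsReversible π Q) (hatom : ∀ z, π {z} ≠ 0)
    (habs : ∀ z m, kpow Q m z ≪ π) (n : ℕ) (a : X) :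
    MemLp (fun z => ((kpow Q n a).rnDeriv π z).toReal) 2 π :=
  memLp_two_toReal_of_lintegral_mul_self_ne_top (Measure.measurable_rnDeriv _ _)
    (lintegral_rnDeriv_mul_rnDeriv_kpow_ne_top hQ (habs a n) (habs a n) (hatom a))

lemma toReal_rnDeriv_kpow_two_mul_sub_one (hQ : IsReversible π Q) (hatom : ∀ z, π {z} ≠ 0)
    (habs : ∀ z m, kpow Q m z ≪ π) (n : ℕ) (a b : X) :
    ((kpow Q (2 * n) a).rnDeriv π b).toReal - 1 =
      cov[fun z => ((kpow Q n a).rnDeriv π z).toReal,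
        fun z => ((kpow Q n b).rnDeriv π z).toReal; π] := by
  have hmass : ∀ z, ∫ w, ((kpow Q n z).rnDeriv π w).toReal ∂π = 1 := fun z => by
    rw [Measure.integral_toReal_rnDeriv (habs z n), probReal_univ]
  rw [covariance_eq_sub (memLp_two_toReal_rnDeriv_kpow hQ hatom habs n a)
    (memLp_two_toReal_rnDeriv_kpow hQ hatom habs n b), hmass, hmass, mul_one,
    rnDeriv_kpow_two_mul_apply hQ (habs a n) (habs b n) (habs a _) (hatom b)]
  have hm : Measurable fun z => (kpow Q n a).rnDeriv π z * (kpow Q n b).rnDeriv π z :=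
    (Measure.measurable_rnDeriv _ _).mul (Measure.measurable_rnDeriv _ _)
  rw [← integral_toReal hm.aemeasurable
    (ae_lt_top hm (lintegral_rnDeriv_mul_rnDeriv_kpow_ne_top hQ (habs a n) (habs b n) (hatom b)))]
  simp only [Pi.mul_apply, ENNReal.toReal_mul]

end Atomic

end SpectralProfile

open SpectralProfile MeasureTheory ProbabilityTheory in
theorem stmt6_general {X : Type*} [MeasurableSpace X] [TopologicalSpace X] [PolishSpace X]
    [BorelSpace X] (Q : Kernel X X) [IsMarkovKernel Q]
    (π : Measure X) [IsProbabilityMeasure π]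
    (hrev : IsReversible π Q)
    (hdens : ∀ (x : X) (n : ℕ), stepDist (Measure.dirac x) Q n ≪ π)
    (x y : X) (n : ℕ) :
    |((stepDist (Measure.dirac x) Q (2 * n)).rnDeriv π y).toReal - 1| ≤
      L2dist (stepDist (Measure.dirac x) Q n) π *
        L2dist (stepDist (Measure.dirac y) Q n) π := by
  have habs : ∀ z m, kpow Q m z ≪ π := fun z m => stepDist_dirac Q z m ▸ hdens z m
  have hatom : ∀ z, π {z} ≠ 0 := fun z hz => by simpa [Kernel.id_apply] using habs z 0 hz
  simp only [stepDist_dirac, L2dist_eq_sqrt_variance (habs _ _)]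
  rw [toReal_rnDeriv_kpow_two_mul_sub_one hrev hatom habs]
  exact abs_covariance_le_sqrt_variance_mul (memLp_two_toReal_rnDeriv_kpow hrev hatom habs n x)
    (memLp_two_toReal_rnDeriv_kpow hrev hatom habs n y)

open SpectralProfile MeasureTheory ProbabilityTheory in
/-- The pointwise Cauchy-Schwarz step in the proof of Proposition 1. -/
theorem stmt6 {X : Type*} [MeasurableSpace X] [TopologicalSpace X] [PolishSpace X]
    [BorelSpace X] (Q : Kernel X X) [IsMarkovKernel Q]
    (π : Measure X) [IsProbabilityMeasure π]
    (hstat : IsStationary π Q) (hrev : IsReversible π Q)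
    (hdens : ∀ (x : X) (n : ℕ), stepDist (Measure.dirac x) Q n ≪ π)
    (x y : X) (n : ℕ) :
    |((stepDist (Measure.dirac x) Q (2 * n)).rnDeriv π y).toReal - 1| ≤
      L2dist (stepDist (Measure.dirac x) Q n) π *
        L2dist (stepDist (Measure.dirac y) Q n) π :=
  stmt6_general Q π hrev hdens x y n
end

section
/- Let P = ½P̃ + ½I be an exactly half-lazy, reversible transition kernel on a Polish space X with stationary probability measure π without atoms (π({x}) = 0 for all x), where each P̃(x,·) has a density with respect to π. Then for all ε ∈ (0,1) and δ ∈ (0,ε), the δ-approximate L² mixing time admits the characterization τ_{2,δ}(ε; P) = inf{ k ∈ ℕ : sup_{x∈X} d₂(δ_x P̃ P^{⌈k/2⌉}, π) ≤ ε − δ and 2^{−⌈k/2⌉} ≤ δ }. -/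
open MeasureTheory ProbabilityTheory ENNReal Filter

/-!
Since `π` has no atoms and `P̃(y, ·) ≪ π`, the non-lazy part of a step never lands on `{x}`, so
the chain started at `x` is at `x` after `m` steps only by holding each time:
`P^m(x, {x}) = 2^{-m}`. The `δ`-condition in `d_{2,δ}` is therefore the same for every `x`; when
it holds, `d_{2,δ} = d₂ + δ`, and otherwise `d_{2,δ} = ∞` for every `x`.
-/

namespace SpectralProfile

variable {X : Type*} [MeasurableSpace X] [MeasurableSingletonClass X]

lemma kpow_apply_singleton_self_of_isHalfLazy {P Pt : Kernel X X} (hlazy : IsHalfLazy P Pt)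
    {x : X} (hx : ∀ y, Pt y {x} = 0) (m : ℕ) :
    kpow P m x {x} = 2⁻¹ ^ m := by
  have hsing : MeasurableSet ({x} : Set X) := measurableSet_singleton x
  have hP : ∀ y, P y {x} = 2⁻¹ * ({x} : Set X).indicator 1 y := fun y => by
    rw [hlazy y {x} hsing, hx, Measure.dirac_apply' y hsing, mul_zero, zero_add]
  induction m with
  | zero => simp [kpow, Kernel.id_apply]
  | succ n ih =>
    calc kpow P (n + 1) x {x} = ∫⁻ y, P y {x} ∂(kpow P n x) := Kernel.comp_apply' _ _ _ hsing
      _ = 2⁻¹ * kpow P n x {x} := by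
        simp_rw [hP]
        rw [lintegral_const_mul _ (measurable_one.indicator hsing), lintegral_indicator_one hsing]
      _ = 2⁻¹ ^ (n + 1) := by rw [ih, pow_succ']

lemma d2delta_eq_of_isHalfLazy {P Pt : Kernel X X} {π : Measure X} (hlazy : IsHalfLazy P Pt)
    (hdens : HasDensities Pt π) (hatomless : ∀ x : X, π {x} = 0) {δ : ℝ} (hδ : 0 ≤ δ)
    (x : X) (k : ℕ) :
    d2delta π P Pt δ x k =
      if (2⁻¹ : ℝ) ^ ceilHalf k ≤ δ then
        ENNReal.ofReal (L2dist (stepDist ((Measure.dirac x).bind Pt) P (ceilHalf k)) π + δ)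
      else ⊤ := by
  have hhold : kpow P (ceilHalf k) x {x} = ENNReal.ofReal ((2⁻¹ : ℝ) ^ ceilHalf k) := by
    rw [kpow_apply_singleton_self_of_isHalfLazy hlazy (fun y => hdens y (hatomless x)),
      ENNReal.ofReal_pow (by norm_num), ENNReal.ofReal_inv_of_pos (by norm_num),
      ENNReal.ofReal_ofNat]
  simp only [d2delta, hhold, ENNReal.ofReal_le_ofReal_iff hδ]

end SpectralProfile

lemma ENNReal.iSup_ofReal_add_le_ofReal_iff {ι : Type*} {f : ι → ℝ} {δ ε : ℝ} (hδ : 0 ≤ δ)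
    (hδε : δ ≤ ε) :
    (⨆ i, ENNReal.ofReal (f i + δ)) ≤ ENNReal.ofReal ε ↔
      (⨆ i, ENNReal.ofReal (f i)) ≤ ENNReal.ofReal (ε - δ) := by
  simp only [iSup_le_iff, ENNReal.ofReal_le_ofReal_iff (hδ.trans hδε),
    ENNReal.ofReal_le_ofReal_iff (sub_nonneg.mpr hδε), le_sub_iff_add_le]

open SpectralProfile MeasureTheory ProbabilityTheory in
theorem stmt10_general {X : Type*} [MeasurableSpace X] [TopologicalSpace X] [PolishSpace X]
    [BorelSpace X] (P Pt : Kernel X X)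
    (π : Measure X) [IsProbabilityMeasure π]
    (hlazy : IsHalfLazy P Pt) (hdens : HasDensities Pt π)
    (hatomless : ∀ x : X, π {x} = 0)
    (ε δ : ℝ) (hδ : δ ∈ Set.Ioo (0 : ℝ) ε) :
    mixTimeApprox π P Pt δ ε =
      sInf {k : ℕ |
        (⨆ x : X, ENNReal.ofReal
            (L2dist (stepDist ((Measure.dirac x).bind Pt) P (ceilHalf k)) π)) ≤
          ENNReal.ofReal (ε - δ) ∧
        ((2 : ℝ)⁻¹) ^ (ceilHalf k) ≤ δ} := by
  have : Nonempty X := nonempty_of_isProbabilityMeasure π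
  unfold mixTimeApprox
  congr 1
  ext k
  simp only [Set.mem_ofPred_eq, d2delta_eq_of_isHalfLazy hlazy hdens hatomless hδ.1.le]
  by_cases hc : (2⁻¹ : ℝ) ^ ceilHalf k ≤ δ
  · simp only [hc, if_true, and_true, ENNReal.iSup_ofReal_add_le_ofReal_iff hδ.1.le hδ.2.le]
  · simp only [hc, if_false, and_false, iSup_const, top_le_iff, ENNReal.ofReal_ne_top]

open SpectralProfile MeasureTheory ProbabilityTheory in
/-- Equation (14): characterization of the `δ`-approximate `L²` mixing time. -/
theorem stmt10 {X : Type*} [MeasurableSpace X] [TopologicalSpace X] [PolishSpace X]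
    [BorelSpace X] (P Pt : Kernel X X) [IsMarkovKernel P] [IsMarkovKernel Pt]
    (π : Measure X) [IsProbabilityMeasure π]
    (hstat : IsStationary π P) (hrev : IsReversible π P)
    (hlazy : IsHalfLazy P Pt) (hdens : HasDensities Pt π)
    (hatomless : ∀ x : X, π {x} = 0)
    (ε δ : ℝ) (hε : ε ∈ Set.Ioo (0 : ℝ) 1) (hδ : δ ∈ Set.Ioo (0 : ℝ) ε) :
    mixTimeApprox π P Pt δ ε =
      sInf {k : ℕ |
        (⨆ x : X, ENNReal.ofReal
            (L2dist (stepDist ((Measure.dirac x).bind Pt) P (ceilHalf k)) π)) ≤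
          ENNReal.ofReal (ε - δ) ∧
        ((2 : ℝ)⁻¹) ^ (ceilHalf k) ≤ δ} :=
  stmt10_general P Pt π hlazy hdens hatomless ε δ hδ
end
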